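/- The full relaxation source S(G) = -(6/τ)·det(G)^{5/6}·G·G̊ on symmetric positive definite matrices vanishes if and only if G is a positive multiple of the identity; moreover, the elastic energy E_e(G) = (c²/4)‖G̊‖² is nonincreasing along solutions of dG/dt = S(G). -/

import Mathlib

open Matrix

attribute [local instance] Matrix.linftyOpNormedRing Matrix.linftyOpNormedAlgebra

/-- Deviatoric (trace-free) part of a 3×3 matrix. -/
noncomputable def dev (A : Matrix (Fin 3) (Fin 3) ℝ) : Matrix (Fin 3) (Fin 3) ℝ :=
  A - (A.trace / 3) • (1 : Matrix (Fin 3) (Fin 3) ℝ)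

/-- The relaxation source `S(G) = -(6/τ) det(G)^(5/6) G G̊`. -/
noncomputable def relaxSource (τ : ℝ) (A : Matrix (Fin 3) (Fin 3) ℝ) :
    Matrix (Fin 3) (Fin 3) ℝ :=
  (-(6 / τ) * A.det ^ ((5 : ℝ) / 6)) • (A * dev A)

/-- The elastic (shear) energy `E_e(G) = (c²/4) ‖G̊‖²` (squared Frobenius norm). -/
noncomputable def elasticEnergy (c : ℝ) (A : Matrix (Fin 3) (Fin 3) ℝ) : ℝ :=
  c ^ 2 / 4 * ∑ i, ∑ j, (dev A i j) ^ 2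

/-!
Write `S(G) = k • (G * G̊)` with `k = -(6/τ) det(G)^(5/6) < 0`. Since `G` is invertible, `S(G)`
vanishes exactly when `G̊` does, i.e. when `G = (tr G / 3) • 1`, and `tr G > 0`. Along the flow,
as `G̊` is trace-free, `dE_e/dt = (c²/2) tr(G̊ᵀ Ġ) = (c²/2) k tr(G̊ᵀ G G̊) ≤ 0`, because
`G̊ᵀ G G̊` is positive semidefinite.
-/

lemma sum_sum_mul_eq_trace_transpose_mul {m n R : Type*} [Fintype m] [Fintype n]
    [AddCommMonoid R] [Mul R] (A B : Matrix m n R) :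
    ∑ i, ∑ j, A i j * B i j = (Aᵀ * B).trace := by
  rw [← vec_dotProduct_vec, dotProduct, Fintype.sum_prod_type, Finset.sum_comm]
  rfl

lemma trace_transpose_mul_mul_self_nonneg {m n : Type*} [Fintype m] [Fintype n]
    (D : Matrix n m ℝ) {A : Matrix n n ℝ}
    (hA : A.PosSemidef) : 0 ≤ (Dᵀ * (A * D)).trace := by
  rw [← Matrix.mul_assoc]
  exact (hA.conjTranspose_mul_mul_same D).trace_nonneg

section MatrixDerivative

variable {n : Type*} [Fintype n] [DecidableEq n]

lemma HasDerivAt.matrix_apply {M : ℝ → Matrix n n ℝ} {M' : Matrix n n ℝ} {t : ℝ}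
    (h : HasDerivAt M M' t) (i j : n) : HasDerivAt (fun s => M s i j) (M' i j) t :=
  (LinearMap.toContinuousLinearMap (entryLinearMap ℝ ℝ i j)).hasFDerivAt.comp_hasDerivAt t h

lemma HasDerivAt.sum_sum_sq_matrix_apply {M : ℝ → Matrix n n ℝ} {M' : Matrix n n ℝ} {t : ℝ}
    (h : HasDerivAt M M' t) :
    HasDerivAt (fun s => ∑ i, ∑ j, M s i j ^ 2) (2 * ((M t)ᵀ * M').trace) t := by
  refine (HasDerivAt.fun_sum (u := Finset.univ) fun i _ =>
    HasDerivAt.fun_sum (u := Finset.univ) fun j _ => (h.matrix_apply i j).pow 2).congr_deriv ?_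
  simp only [Nat.cast_ofNat, ← sum_sum_mul_eq_trace_transpose_mul, Finset.mul_sum]
  exact Finset.sum_congr rfl fun i _ => Finset.sum_congr rfl fun j _ => by ring

end MatrixDerivative

lemma trace_dev (A : Matrix (Fin 3) (Fin 3) ℝ) : (dev A).trace = 0 := by
  simp [dev, trace_sub, trace_smul, trace_one]

lemma dev_smul_one (a : ℝ) : dev (a • 1) = 0 := by
  simp [dev, trace_smul, trace_one]

lemma dev_eq_zero_iff {A : Matrix (Fin 3) (Fin 3) ℝ} (hA : A.PosDef) :
    dev A = 0 ↔ ∃ a : ℝ, 0 < a ∧ A = a • 1 := by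
  refine ⟨fun h => ⟨A.trace / 3, by linarith [hA.trace_pos], sub_eq_zero.mp h⟩, ?_⟩
  rintro ⟨a, -, rfl⟩
  exact dev_smul_one a

noncomputable def devCLM : Matrix (Fin 3) (Fin 3) ℝ →L[ℝ] Matrix (Fin 3) (Fin 3) ℝ :=
  LinearMap.toContinuousLinearMap
    { toFun := dev
      map_add' := fun A B => by
        simp only [dev, trace_add, add_div, add_smul]
        abel
      map_smul' := fun r A => by
        simp only [dev, trace_smul, smul_eq_mul, mul_div_assoc, mul_smul, smul_sub]
        rfl }

lemma HasDerivAt.dev {G : ℝ → Matrix (Fin 3) (Fin 3) ℝ} {G' : Matrix (Fin 3) (Fin 3) ℝ}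
    {t : ℝ} (h : HasDerivAt G G' t) : HasDerivAt (fun s => dev (G s)) (dev G') t :=
  devCLM.hasFDerivAt.comp_hasDerivAt t h

lemma trace_transpose_mul_dev {B : Matrix (Fin 3) (Fin 3) ℝ} (hB : B.trace = 0)
    (M : Matrix (Fin 3) (Fin 3) ℝ) : (Bᵀ * dev M).trace = (Bᵀ * M).trace := by
  simp [dev, Matrix.mul_sub, trace_sub, trace_smul, trace_transpose, hB]

lemma hasDerivAt_elasticEnergy (c : ℝ) {G : ℝ → Matrix (Fin 3) (Fin 3) ℝ}
    {G' : Matrix (Fin 3) (Fin 3) ℝ} {t : ℝ} (h : HasDerivAt G G' t) :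
    HasDerivAt (fun s => elasticEnergy c (G s)) (c ^ 2 / 2 * ((dev (G t))ᵀ * G').trace) t := by
  have h' := h.dev.sum_sum_sq_matrix_apply.const_mul (c ^ 2 / 4)
  rw [trace_transpose_mul_dev (trace_dev _)] at h'
  exact h'.congr_deriv (by ring)

lemma relaxSource_coeff_neg {τ : ℝ} (hτ : 0 < τ) {A : Matrix (Fin 3) (Fin 3) ℝ}
    (hA : A.PosDef) : -(6 / τ) * A.det ^ ((5 : ℝ) / 6) < 0 :=
  mul_neg_of_neg_of_pos (neg_neg_of_pos (by positivity)) (Real.rpow_pos_of_pos hA.det_pos _)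

lemma relaxSource_eq_zero_iff {τ : ℝ} (hτ : 0 < τ) {A : Matrix (Fin 3) (Fin 3) ℝ}
    (hA : A.PosDef) : relaxSource τ A = 0 ↔ dev A = 0 := by
  rw [relaxSource, smul_eq_zero, or_iff_right (relaxSource_coeff_neg hτ hA).ne,
    hA.isUnit.mul_right_eq_zero]

lemma trace_transpose_dev_mul_relaxSource_nonpos {τ : ℝ} (hτ : 0 < τ)
    {A : Matrix (Fin 3) (Fin 3) ℝ} (hA : A.PosDef) :
    ((dev A)ᵀ * relaxSource τ A).trace ≤ 0 := by
  rw [relaxSource, Matrix.mul_smul, trace_smul, smul_eq_mul]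
  exact mul_nonpos_of_nonpos_of_nonneg (relaxSource_coeff_neg hτ hA).le
    (trace_transpose_mul_mul_self_nonneg _ hA.posSemidef)

theorem relaxation_source_equilibrium_and_dissipation_general
    (τ c : ℝ) (hτ : 0 < τ) :
    (∀ A : Matrix (Fin 3) (Fin 3) ℝ, A.IsSymm → A.PosDef →
      (relaxSource τ A = 0 ↔
        ∃ a : ℝ, 0 < a ∧ A = a • (1 : Matrix (Fin 3) (Fin 3) ℝ))) ∧
      (∀ G : ℝ → Matrix (Fin 3) (Fin 3) ℝ,
        (∀ t, (G t).IsSymm) → (∀ t, (G t).PosDef) →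
        (∀ t, HasDerivAt G (relaxSource τ (G t)) t) →
        Antitone fun t => elasticEnergy c (G t)) := by
  refine ⟨fun A _ hA => (relaxSource_eq_zero_iff hτ hA).trans (dev_eq_zero_iff hA), ?_⟩
  intro G _ hG hflow
  refine antitone_of_hasDerivAt_nonpos (fun t => hasDerivAt_elasticEnergy c (hflow t)) fun t => ?_
  exact mul_nonpos_of_nonneg_of_nonpos (by positivity)
    (trace_transpose_dev_mul_relaxSource_nonpos hτ (hG t))

/-- The relaxation source on SPD matrices vanishes iff `G` is a positive multiple of
the identity; moreover the elastic energy is nonincreasing along solutions of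
`dG/dt = S(G)`. -/
theorem relaxation_source_equilibrium_and_dissipation
    (τ c : ℝ) (hτ : 0 < τ) (hc : 0 < c) :
    (∀ A : Matrix (Fin 3) (Fin 3) ℝ, A.IsSymm → A.PosDef →
      (relaxSource τ A = 0 ↔
        ∃ a : ℝ, 0 < a ∧ A = a • (1 : Matrix (Fin 3) (Fin 3) ℝ))) ∧
      (∀ G : ℝ → Matrix (Fin 3) (Fin 3) ℝ,
        (∀ t, (G t).IsSymm) → (∀ t, (G t).PosDef) →
        (∀ t, HasDerivAt G (relaxSource τ (G t)) t) →
        Antitone fun t => elasticEnergy c (G t)) :=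
  relaxation_source_equilibrium_and_dissipation_general τ c hτ
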